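/- arXiv:1911.08858 — 3 statements merged into one kernel-verified Lean document; each statement's English description precedes it below -/
import Mathlib

section
/- Let X be a compact metric space, Y a Hausdorff space, and f : X → Y continuous and locally injective. Then the multiplicity function m : X → ℕ, m(x) = #f⁻¹(f(x)), is upper semicontinuous: for every a ∈ ℝ, the set {x : m(x) < a} is open in X. -/
open Set

/-- For `X` a compact metric space, `Y` Hausdorff and `f : X → Y` continuous and
locally injective, the multiplicity function `m(x) = #f⁻¹(f x)` is upper
semicontinuous: for every `a ∈ ℝ` the set `{x : m x < a}` is open. -/
theorem multiplicity_upperSemicontinuous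
    {X Y : Type*} [MetricSpace X] [CompactSpace X] [TopologicalSpace Y] [T2Space Y]
    (f : X → Y) (hf : Continuous f)
    (hloc : ∀ x, ∃ U ∈ nhds x, Set.InjOn f U) :
    ∀ a : ℝ, IsOpen {x : X | (Nat.card (f ⁻¹' {f x}) : ℝ) < a} := by
  -- choose open injectivity neighborhoods
  have hloc' : ∀ x : X, ∃ V : Set X, IsOpen V ∧ x ∈ V ∧ Set.InjOn f V := by
    intro x
    obtain ⟨U, hU, hinj⟩ := hloc x
    obtain ⟨V, hVU, hVo, hxV⟩ := mem_nhds_iff.mp hU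
    exact ⟨V, hVo, hxV, hinj.mono hVU⟩
  choose V hVo hxV hVinj using hloc'
  -- generic injection lemma: fiber points covered by V's over a set s inject into s
  have inj_lemma : ∀ (y : Y) (s : Set X), (f ⁻¹' {y} ⊆ ⋃ p ∈ s, V p) →
      ∃ g : (f ⁻¹' {y}) → s, Function.Injective g := by
    intro y s hcov
    have key : ∀ q : (f ⁻¹' {y}), ∃ p, p ∈ s ∧ (q : X) ∈ V p := by
      intro q
      simpa [mem_iUnion] using hcov q.2
    choose g hg1 hg2 using key
    refine ⟨fun q => ⟨g q, hg1 q⟩, ?_⟩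
    intro q₁ q₂ h
    have hp : g q₁ = g q₂ := by simpa using congrArg Subtype.val h
    have h1 : (q₁ : X) ∈ V (g q₂) := hp ▸ hg2 q₁
    have h2 : (q₂ : X) ∈ V (g q₂) := hg2 q₂
    have hfq : f (q₁ : X) = f (q₂ : X) := by
      have e1 : f (q₁ : X) = y := q₁.2
      have e2 : f (q₂ : X) = y := q₂.2
      rw [e1, e2]
    exact Subtype.ext (hVinj (g q₂) h1 h2 hfq)
  -- every fiber is finite
  have hfin : ∀ y : Y, (f ⁻¹' {y}).Finite := by
    intro y
    have hFc : IsClosed (f ⁻¹' {y}) := isClosed_singleton.preimage hf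
    have hK : IsCompact (f ⁻¹' {y}) := hFc.isCompact
    obtain ⟨t, ht⟩ := hK.elim_finite_subcover (fun p : X => V p) (fun p => hVo p)
      (fun q _ => mem_iUnion.mpr ⟨q, hxV q⟩)
    obtain ⟨g, hg⟩ := inj_lemma y (t : Set X) (by simpa using ht)
    have : Finite (f ⁻¹' {y}) := Finite.of_injective g hg
    exact Set.toFinite _
  intro a
  rw [isOpen_iff_mem_nhds]
  intro x₀ hx₀
  set F : Set X := f ⁻¹' {f x₀} with hF
  have hFfin : F.Finite := hfin (f x₀)
  haveI : Finite F := hFfin.to_subtype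
  set U : Set X := ⋃ p ∈ F, V p with hU
  have hUopen : IsOpen U := isOpen_biUnion fun p _ => hVo p
  have hFU : F ⊆ U := fun q hq => mem_biUnion hq (hxV q)
  have hKcomp : IsCompact Uᶜ := hUopen.isClosed_compl.isCompact
  have hfK : IsClosed (f '' Uᶜ) := (hKcomp.image hf).isClosed
  have hx₀W : f x₀ ∉ f '' Uᶜ := by
    rintro ⟨k, hk, hfk⟩
    exact hk (hFU (by simpa [hF] using hfk))
  have hWopen : IsOpen (f ⁻¹' (f '' Uᶜ)ᶜ) := hfK.isOpen_compl.preimage hf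
  refine Filter.mem_of_superset (hWopen.mem_nhds (by simpa using hx₀W)) ?_
  intro x hx
  -- the fiber of x is contained in U
  have hcov : f ⁻¹' {f x} ⊆ ⋃ p ∈ F, V p := by
    intro q hq
    by_contra hqU
    exact hx ⟨q, hqU, by simpa using hq⟩
  obtain ⟨g, hg⟩ := inj_lemma (f x) F hcov
  have hle : Nat.card (f ⁻¹' {f x}) ≤ Nat.card F :=
    Nat.card_le_card_of_injective g hg
  have : (Nat.card (f ⁻¹' {f x}) : ℝ) ≤ (Nat.card (f ⁻¹' {f x₀}) : ℝ) := by
    exact_mod_cast hle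
  exact lt_of_le_of_lt this hx₀
end

section
/- Let f : X → Y be continuous, locally injective, with X compact Hausdorff and Y Hausdorff. Then the set D of points of maximal multiplicity, D = {x ∈ X : m(x) = max m}, is closed in X. -/
open Set Topology

/-- Fibers of a locally injective continuous map from a compact Hausdorff space are finite. -/
theorem fiber_finite_of_locInj {X Y : Type*} [TopologicalSpace X] [CompactSpace X] [T2Space X]
    [TopologicalSpace Y] [T2Space Y]
    (f : X → Y) (hf : Continuous f)
    (hloc : ∀ x, ∃ U ∈ nhds x, Set.InjOn f U) (y : Y) :
    (f ⁻¹' {y}).Finite := by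
  have hc : IsCompact (f ⁻¹' {y}) := (isClosed_singleton.preimage hf).isCompact
  choose U hU hinj using hloc
  obtain ⟨t, hcov⟩ := hc.elim_nhds_subcover' (fun x _ => U x) (fun x _ => hU x)
  refine Set.Finite.subset (t.finite_toSet.image (fun z : f ⁻¹' {y} => (z : X))) fun p hp => ?_
  obtain ⟨x, hxt, hpx⟩ := Set.mem_iUnion₂.1 (hcov hp)
  have hxs : (x : X) ∈ f ⁻¹' {y} := x.2
  have hxe : (p : X) = (x : X) := by
    apply hinj x hpx (mem_of_mem_nhds (hU x))
    simp only [Set.mem_preimage, Set.mem_singleton_iff] at hp hxs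
    rw [hp, hxs]
  exact ⟨x, by simpa using hxt, hxe.symm⟩

theorem usc_multiplicity {X Y : Type*} [TopologicalSpace X] [CompactSpace X] [T2Space X]
    [TopologicalSpace Y] [T2Space Y]
    (f : X → Y) (hf : Continuous f)
    (hloc : ∀ x, ∃ U ∈ nhds x, Set.InjOn f U) (x : X) :
    ∃ N ∈ nhds x, ∀ x' ∈ N, Nat.card (f ⁻¹' {f x'}) ≤ Nat.card (f ⁻¹' {f x}) := by
  have hF : (f ⁻¹' {f x}).Finite := fiber_finite_of_locInj f hf hloc (f x)
  choose U hU hinj using hloc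
  set V : X → Set X := fun z => interior (U z) with hV
  have hVmem : ∀ z, z ∈ V z := fun z => mem_interior_iff_mem_nhds.2 (hU z)
  have hVinj : ∀ z, Set.InjOn f (V z) := fun z => (hinj z).mono interior_subset
  set W : Set X := ⋃ z ∈ f ⁻¹' {f x}, V z with hWdef
  have hWopen : IsOpen W := isOpen_biUnion fun z _ => isOpen_interior
  have hFW : f ⁻¹' {f x} ⊆ W := fun z hz => Set.mem_biUnion hz (hVmem z)
  have hK : IsCompact (Wᶜ) := hWopen.isClosed_compl.isCompact
  have hfK : IsClosed (f '' Wᶜ) := (hK.image hf).isClosed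
  have hfxO : f x ∈ (f '' Wᶜ)ᶜ := by
    rintro ⟨p, hp, hpe⟩
    exact hp (hFW (by simp [hpe]))
  have hN : f ⁻¹' (f '' Wᶜ)ᶜ ∈ nhds x := (hfK.isOpen_compl.preimage hf).mem_nhds hfxO
  refine ⟨_, hN, fun x' hx' => ?_⟩
  have hsub : f ⁻¹' {f x'} ⊆ W := by
    intro p hp
    by_contra hpW
    exact hx' ⟨p, hpW, hp⟩
  have hfin : Finite (f ⁻¹' {f x}) := hF
  have hinjmap : ∀ p : f ⁻¹' {f x'}, ∃ z : f ⁻¹' {f x}, (p : X) ∈ V z := by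
    intro p
    obtain ⟨z, hz, hpz⟩ := Set.mem_iUnion₂.1 (hsub p.2)
    exact ⟨⟨z, hz⟩, hpz⟩
  choose g hg using hinjmap
  have hginj : Function.Injective g := by
    intro p q hpq
    have h1 : (p : X) ∈ V (g p) := hg p
    have h2 : (q : X) ∈ V (g p) := by rw [hpq]; exact hg q
    have hfe : f (p : X) = f (q : X) := by
      have hp := p.2; have hq := q.2
      simp only [Set.mem_preimage, Set.mem_singleton_iff] at hp hq
      rw [hp, hq]
    exact Subtype.ext (hVinj (g p) h1 h2 hfe)
  exact Nat.card_le_card_of_injective g hginj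

/-- For `f : X → Y` continuous and locally injective with `X` compact Hausdorff
and `Y` Hausdorff, the set of points of maximal multiplicity
`D = {x : ∀ y, m y ≤ m x}` (where `m x = #f⁻¹(f x)`) is closed in `X`. -/
theorem top_multiplicity_stratum_closed
    {X Y : Type*} [TopologicalSpace X] [CompactSpace X] [T2Space X]
    [TopologicalSpace Y] [T2Space Y]
    (f : X → Y) (hf : Continuous f)
    (hloc : ∀ x, ∃ U ∈ nhds x, Set.InjOn f U) :
    IsClosed {x : X | ∀ y : X, Nat.card (f ⁻¹' {f y}) ≤ Nat.card (f ⁻¹' {f x})} := by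
  rw [← isOpen_compl_iff, isOpen_iff_mem_nhds]
  intro x hx
  simp only [Set.mem_compl_iff, Set.mem_setOf_eq, not_forall, not_le] at hx
  obtain ⟨y0, hy0⟩ := hx
  obtain ⟨N, hN, hNle⟩ := usc_multiplicity f hf hloc x
  filter_upwards [hN] with x' hx'
  simp only [Set.mem_compl_iff, Set.mem_setOf_eq, not_forall, not_le]
  exact ⟨y0, lt_of_le_of_lt (hNle x' hx') hy0⟩
end

section
/- Let C = {ρ(ω)·ω : ω ∈ S^(n-1)} be a star-shaped sphere in ℝⁿ for continuous ρ > 0. Then ℝⁿ \ C has exactly two connected components: the bounded component {t·ω : 0 ≤ t < ρ(ω)} and the unbounded component {t·ω : t > ρ(ω)}. -/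
open Metric Set

noncomputable def StarSep.dir {n : ℕ} (x : EuclideanSpace ℝ (Fin n)) (hx : x ≠ 0) :
    Metric.sphere (0 : EuclideanSpace ℝ (Fin n)) 1 :=
  ⟨‖x‖⁻¹ • x, by
    rw [mem_sphere_zero_iff_norm, norm_smul, norm_inv, norm_norm,
      inv_mul_cancel₀ (norm_ne_zero_iff.2 hx)]⟩

lemma StarSep.smul_dir {n : ℕ} (x : EuclideanSpace ℝ (Fin n)) (hx : x ≠ 0) :
    ‖x‖ • (StarSep.dir x hx : EuclideanSpace ℝ (Fin n)) = x :=
  smul_inv_smul₀ (norm_ne_zero_iff.2 hx) x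

lemma StarSep.polar_unique {n : ℕ} {x : EuclideanSpace ℝ (Fin n)}
    (ω : Metric.sphere (0 : EuclideanSpace ℝ (Fin n)) 1) {t : ℝ}
    (ht : 0 < t) (h : x = t • (ω : EuclideanSpace ℝ (Fin n))) :
    ∃ hx : x ≠ 0, t = ‖x‖ ∧ StarSep.dir x hx = ω := by
  have hω : ‖(ω : EuclideanSpace ℝ (Fin n))‖ = 1 := mem_sphere_zero_iff_norm.1 ω.2
  have hnx : ‖x‖ = t := by rw [h, norm_smul, hω, mul_one, Real.norm_eq_abs, abs_of_pos ht]
  have hx : x ≠ 0 := by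
    intro h0
    rw [h0, norm_zero] at hnx
    exact ht.ne hnx
  refine ⟨hx, hnx.symm, ?_⟩
  apply Subtype.ext
  show ‖x‖⁻¹ • x = _
  rw [h, norm_smul, hω, mul_one, Real.norm_eq_abs, abs_of_pos ht, inv_smul_smul₀ ht.ne']

/-- Let `C = {ρ(ω)·ω : ω ∈ S^(n-1)}` be a star-shaped sphere in `ℝⁿ` for a
continuous `ρ > 0`.  Then `ℝⁿ \ C` has exactly two connected components: the
bounded "inside" `{t·ω : 0 ≤ t < ρ(ω)}` and the unbounded "outside"
`{t·ω : t > ρ(ω)}`; each is open and connected, they are disjoint, their union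
is the complement of `C`, and the complement is not connected. -/
theorem starShaped_sphere_separates
    (n : ℕ) (hn : 2 ≤ n)
    (ρ : (Metric.sphere (0 : EuclideanSpace ℝ (Fin n)) 1) → ℝ)
    (hρ : Continuous ρ) (hρpos : ∀ ω, 0 < ρ ω) :
    let C : Set (EuclideanSpace ℝ (Fin n)) :=
      Set.range fun ω : (Metric.sphere (0 : EuclideanSpace ℝ (Fin n)) 1) =>
        ρ ω • (ω : EuclideanSpace ℝ (Fin n))
    let Inside : Set (EuclideanSpace ℝ (Fin n)) :=
      {x | ∃ ω : (Metric.sphere (0 : EuclideanSpace ℝ (Fin n)) 1),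
        ∃ t : ℝ, 0 ≤ t ∧ t < ρ ω ∧ x = t • (ω : EuclideanSpace ℝ (Fin n))}
    let Outside : Set (EuclideanSpace ℝ (Fin n)) :=
      {x | ∃ ω : (Metric.sphere (0 : EuclideanSpace ℝ (Fin n)) 1),
        ∃ t : ℝ, ρ ω < t ∧ x = t • (ω : EuclideanSpace ℝ (Fin n))}
    IsOpen Inside ∧ IsOpen Outside ∧ IsConnected Inside ∧ IsConnected Outside ∧
      Disjoint Inside Outside ∧ Inside ∪ Outside = Cᶜ ∧
      Bornology.IsBounded Inside ∧ ¬ Bornology.IsBounded Outside ∧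
      ¬ IsPreconnected (Cᶜ : Set (EuclideanSpace ℝ (Fin n))) := by
  intro C Inside Outside
  -- defeq membership lemmas
  have hIdef : ∀ x : EuclideanSpace ℝ (Fin n), x ∈ Inside ↔
      ∃ ω : (Metric.sphere (0 : EuclideanSpace ℝ (Fin n)) 1), ∃ t : ℝ,
        0 ≤ t ∧ t < ρ ω ∧ x = t • (ω : EuclideanSpace ℝ (Fin n)) := fun _ => Iff.rfl
  have hOdef : ∀ x : EuclideanSpace ℝ (Fin n), x ∈ Outside ↔
      ∃ ω : (Metric.sphere (0 : EuclideanSpace ℝ (Fin n)) 1), ∃ t : ℝ,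
        ρ ω < t ∧ x = t • (ω : EuclideanSpace ℝ (Fin n)) := fun _ => Iff.rfl
  have hCdef : ∀ x : EuclideanSpace ℝ (Fin n), x ∈ C ↔
      ∃ ω : (Metric.sphere (0 : EuclideanSpace ℝ (Fin n)) 1),
        ρ ω • (ω : EuclideanSpace ℝ (Fin n)) = x := fun _ => Iff.rfl
  -- a fixed unit vector
  have hω₀ : (EuclideanSpace.single (⟨0, by omega⟩ : Fin n) (1:ℝ)) ∈
      Metric.sphere (0 : EuclideanSpace ℝ (Fin n)) 1 := by
    rw [mem_sphere_zero_iff_norm, EuclideanSpace.norm_single, norm_one]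
  set ω₀ : Metric.sphere (0 : EuclideanSpace ℝ (Fin n)) 1 := ⟨_, hω₀⟩ with hω₀def
  have hrank : 1 < Module.rank ℝ (EuclideanSpace ℝ (Fin n)) := by
    have h1 : Module.rank ℝ (EuclideanSpace ℝ (Fin n)) = n := by
      rw [← Module.finrank_eq_rank, finrank_euclideanSpace_fin]
    rw [h1]
    exact_mod_cast (by omega : 1 < n)
  -- min and max of ρ
  obtain ⟨ωm, -, hωm⟩ := isCompact_univ.exists_isMinOn ⟨ω₀, mem_univ _⟩ hρ.continuousOn
  obtain ⟨ωM, -, hωM⟩ := isCompact_univ.exists_isMaxOn ⟨ω₀, mem_univ _⟩ hρ.continuousOn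
  set m := ρ ωm with hm
  set M := ρ ωM with hM
  have hmle : ∀ ω, m ≤ ρ ω := fun ω => isMinOn_iff.1 hωm ω (mem_univ _)
  have hMle : ∀ ω, ρ ω ≤ M := fun ω => isMaxOn_iff.1 hωM ω (mem_univ _)
  have hmpos : 0 < m := hρpos ωm
  have hMpos : 0 < M := hρpos ωM
  have hnorm : ∀ ω : Metric.sphere (0 : EuclideanSpace ℝ (Fin n)) 1,
      ‖(ω : EuclideanSpace ℝ (Fin n))‖ = 1 := fun ω => mem_sphere_zero_iff_norm.1 ω.2
  -- membership characterizations
  have hmemI : ∀ x : EuclideanSpace ℝ (Fin n),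
      x ∈ Inside ↔ (x = 0 ∨ ∃ hx : x ≠ 0, ‖x‖ < ρ (StarSep.dir x hx)) := by
    intro x
    rw [hIdef]
    constructor
    · rintro ⟨ω, t, ht0, htlt, rfl⟩
      rcases eq_or_lt_of_le ht0 with h0 | h0
      · left; rw [← h0, zero_smul]
      · right
        obtain ⟨hx, hteq, hdir⟩ := StarSep.polar_unique ω h0 rfl
        exact ⟨hx, by rw [hdir, ← hteq]; exact htlt⟩
    · rintro (rfl | ⟨hx, hlt⟩)
      · exact ⟨ω₀, 0, le_refl _, hρpos _, (zero_smul ℝ _).symm⟩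
      · exact ⟨StarSep.dir x hx, ‖x‖, norm_nonneg x, hlt, (StarSep.smul_dir x hx).symm⟩
  have hmemO : ∀ x : EuclideanSpace ℝ (Fin n),
      x ∈ Outside ↔ ∃ hx : x ≠ 0, ρ (StarSep.dir x hx) < ‖x‖ := by
    intro x
    rw [hOdef]
    constructor
    · rintro ⟨ω, t, htlt, rfl⟩
      have h0 : (0:ℝ) < t := (hρpos ω).trans htlt
      obtain ⟨hx, hteq, hdir⟩ := StarSep.polar_unique ω h0 rfl
      exact ⟨hx, by rw [hdir, ← hteq]; exact htlt⟩
    · rintro ⟨hx, hlt⟩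
      exact ⟨StarSep.dir x hx, ‖x‖, hlt, (StarSep.smul_dir x hx).symm⟩
  have hmemC : ∀ x : EuclideanSpace ℝ (Fin n),
      x ∈ C ↔ ∃ hx : x ≠ 0, ρ (StarSep.dir x hx) = ‖x‖ := by
    intro x
    rw [hCdef]
    constructor
    · rintro ⟨ω, rfl⟩
      obtain ⟨hx, hteq, hdir⟩ := StarSep.polar_unique ω (hρpos ω) rfl
      exact ⟨hx, by rw [hdir, ← hteq]⟩
    · rintro ⟨hx, heq⟩
      exact ⟨StarSep.dir x hx, by rw [heq, StarSep.smul_dir]⟩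
  -- openness
  have hSopen : IsOpen {x : EuclideanSpace ℝ (Fin n) | x ≠ 0} := isOpen_compl_singleton
  have hdirc : Continuous fun u : {x : EuclideanSpace ℝ (Fin n) | x ≠ 0} =>
      StarSep.dir (u : EuclideanSpace ℝ (Fin n)) u.2 := by
    apply Continuous.subtype_mk
    refine Continuous.smul (Continuous.inv₀ (continuous_norm.comp continuous_subtype_val) ?_)
      continuous_subtype_val
    intro u
    exact norm_ne_zero_iff.2 u.2
  have hIopen : IsOpen Inside := by
    have h1 : IsOpen (Subtype.val ''
        {u : {x : EuclideanSpace ℝ (Fin n) | x ≠ 0} |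
          ‖(u : EuclideanSpace ℝ (Fin n))‖ < ρ (StarSep.dir (u : EuclideanSpace ℝ (Fin n)) u.2)}) :=
      hSopen.isOpenMap_subtype_val _
        (isOpen_lt (continuous_norm.comp continuous_subtype_val) (hρ.comp hdirc))
    have h2 : Inside = ball (0 : EuclideanSpace ℝ (Fin n)) m ∪ Subtype.val ''
        {u : {x : EuclideanSpace ℝ (Fin n) | x ≠ 0} |
          ‖(u : EuclideanSpace ℝ (Fin n))‖ < ρ (StarSep.dir (u : EuclideanSpace ℝ (Fin n)) u.2)} := by
      ext x
      rw [hmemI x]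
      constructor
      · rintro (rfl | ⟨hx, hlt⟩)
        · exact Or.inl (by simpa using hmpos)
        · exact Or.inr ⟨⟨x, hx⟩, hlt, rfl⟩
      · rintro (hb | ⟨u, hu, rfl⟩)
        · rcases eq_or_ne x 0 with rfl | hx
          · exact Or.inl rfl
          · refine Or.inr ⟨hx, lt_of_lt_of_le ?_ (hmle _)⟩
            simpa [mem_ball, dist_zero_right] using hb
        · exact Or.inr ⟨u.2, hu⟩
    rw [h2]
    exact isOpen_ball.union h1
  have hOopen : IsOpen Outside := by
    have h1 : IsOpen (Subtype.val ''
        {u : {x : EuclideanSpace ℝ (Fin n) | x ≠ 0} |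
          ρ (StarSep.dir (u : EuclideanSpace ℝ (Fin n)) u.2) < ‖(u : EuclideanSpace ℝ (Fin n))‖}) :=
      hSopen.isOpenMap_subtype_val _
        (isOpen_lt (hρ.comp hdirc) (continuous_norm.comp continuous_subtype_val))
    have h2 : Outside = Subtype.val ''
        {u : {x : EuclideanSpace ℝ (Fin n) | x ≠ 0} |
          ρ (StarSep.dir (u : EuclideanSpace ℝ (Fin n)) u.2) < ‖(u : EuclideanSpace ℝ (Fin n))‖} := by
      ext x
      rw [hmemO x]
      constructor
      · rintro ⟨hx, hlt⟩; exact ⟨⟨x, hx⟩, hlt, rfl⟩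
      · rintro ⟨u, hu, rfl⟩; exact ⟨u.2, hu⟩
    rw [h2]; exact h1
  -- disjointness
  have hdisj : Disjoint Inside Outside := by
    rw [Set.disjoint_left]
    intro x hxI hxO
    obtain ⟨hx, hltO⟩ := (hmemO x).1 hxO
    rcases (hmemI x).1 hxI with rfl | ⟨hx', hltI⟩
    · exact hx rfl
    · exact absurd (hltI.trans hltO) (lt_irrefl _)
  -- union
  have hunion : Inside ∪ Outside = Cᶜ := by
    ext x
    simp only [Set.mem_union, Set.mem_compl_iff]
    rw [hmemI x, hmemO x, hmemC x]
    constructor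
    · rintro ((rfl | ⟨hx, hlt⟩) | ⟨hx, hlt⟩) ⟨hx', heq⟩
      · exact hx' rfl
      · exact absurd heq (ne_of_gt hlt)
      · exact absurd heq (ne_of_lt hlt)
    · intro hc
      rcases eq_or_ne x 0 with rfl | hx
      · exact Or.inl (Or.inl rfl)
      rcases lt_trichotomy ‖x‖ (ρ (StarSep.dir x hx)) with h | h | h
      · exact Or.inl (Or.inr ⟨hx, h⟩)
      · exact absurd ⟨hx, h.symm⟩ hc
      · exact Or.inr ⟨hx, h⟩
  -- connectedness of Inside
  have h0I : (0 : EuclideanSpace ℝ (Fin n)) ∈ Inside :=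
    (hIdef 0).2 ⟨ω₀, 0, le_refl _, hρpos _, (zero_smul ℝ _).symm⟩
  have hIconn : IsConnected Inside := by
    refine (IsPathConnected.isConnected ⟨0, h0I, ?_⟩)
    intro y hy
    obtain ⟨ω, t, ht0, htlt, rfl⟩ := (hIdef y).1 hy
    refine ⟨⟨⟨fun s => ((s:ℝ) * t) • (ω : EuclideanSpace ℝ (Fin n)), ?_⟩,
      by simp, by simp⟩, ?_⟩
    · exact (continuous_subtype_val.mul continuous_const).smul continuous_const
    · intro s
      exact (hIdef _).2 ⟨ω, (s:ℝ) * t, mul_nonneg s.2.1 ht0,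
        lt_of_le_of_lt (mul_le_of_le_one_left ht0 s.2.2) htlt, rfl⟩
  -- connectedness of Outside
  have hRgt : ∀ ω, ρ ω < M + 1 := fun ω => lt_of_le_of_lt (hMle ω) (lt_add_one M)
  have hRpos : (0:ℝ) < M + 1 := by linarith
  have hsphere_sub : Metric.sphere (0 : EuclideanSpace ℝ (Fin n)) (M+1) ⊆ Outside := by
    intro x hx
    have hnx : ‖x‖ = M + 1 := mem_sphere_zero_iff_norm.1 hx
    have hx0 : x ≠ 0 := by
      intro h; rw [h, norm_zero] at hnx; linarith
    exact (hmemO x).2 ⟨hx0, by rw [hnx]; exact hRgt _⟩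
  have hradial : ∀ (ω : Metric.sphere (0 : EuclideanSpace ℝ (Fin n)) 1) (t : ℝ), ρ ω < t →
      JoinedIn Outside (t • (ω : EuclideanSpace ℝ (Fin n)))
        ((M+1) • (ω : EuclideanSpace ℝ (Fin n))) := by
    intro ω t ht
    refine ⟨⟨⟨fun s => ((1 - (s:ℝ)) * t + (s:ℝ) * (M+1)) • (ω : EuclideanSpace ℝ (Fin n)), ?_⟩,
      by simp, by simp⟩, ?_⟩
    · fun_prop
    · intro s
      refine (hOdef _).2 ⟨ω, (1 - (s:ℝ)) * t + (s:ℝ) * (M+1), ?_, rfl⟩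
      have hs0 := s.2.1
      have hs1 := s.2.2
      rcases eq_or_lt_of_le hs0 with h | h
      · rw [← h]; ring_nf; linarith
      · nlinarith [mul_pos h (sub_pos.2 (hRgt ω)),
          mul_nonneg (sub_nonneg.2 hs1) (sub_nonneg.2 ht.le)]
  have hbase : ((M+1) • (ω₀ : EuclideanSpace ℝ (Fin n))) ∈ Outside :=
    (hOdef _).2 ⟨ω₀, M+1, hRgt _, rfl⟩
  have hOconn : IsConnected Outside := by
    have hsp : IsPathConnected (Metric.sphere (0 : EuclideanSpace ℝ (Fin n)) (M+1)) :=
      isPathConnected_sphere hrank 0 hRpos.le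
    refine IsPathConnected.isConnected ⟨(M+1) • (ω₀ : EuclideanSpace ℝ (Fin n)), hbase, ?_⟩
    intro y hy
    obtain ⟨ω, t, htlt, rfl⟩ := (hOdef y).1 hy
    have hmem : ∀ η : Metric.sphere (0 : EuclideanSpace ℝ (Fin n)) 1,
        ((M+1) • (η : EuclideanSpace ℝ (Fin n))) ∈
          Metric.sphere (0 : EuclideanSpace ℝ (Fin n)) (M+1) := by
      intro η
      rw [mem_sphere_zero_iff_norm, norm_smul, hnorm η, mul_one, Real.norm_eq_abs,
        abs_of_pos hRpos]
    have hj1 : JoinedIn Outside ((M+1) • (ω₀ : EuclideanSpace ℝ (Fin n)))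
        ((M+1) • (ω : EuclideanSpace ℝ (Fin n))) :=
      (hsp.joinedIn _ (hmem ω₀) _ (hmem ω)).mono hsphere_sub
    exact hj1.trans (hradial ω t htlt).symm
  -- boundedness
  have hIbdd : Bornology.IsBounded Inside := by
    apply (Metric.isBounded_closedBall (x := (0 : EuclideanSpace ℝ (Fin n))) (r := M)).subset
    intro x hx
    rw [mem_closedBall_zero_iff]
    rcases (hmemI x).1 hx with rfl | ⟨hx', hlt⟩
    · simpa using hMpos.le
    · exact hlt.le.trans (hMle _)
  have hOunbdd : ¬ Bornology.IsBounded Outside := by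
    intro hb
    obtain ⟨r, hr⟩ := isBounded_iff_forall_norm_le.1 hb
    set t := max (M + 1) (r + 1) with htdef
    have htO : (t • (ω₀ : EuclideanSpace ℝ (Fin n))) ∈ Outside :=
      (hOdef _).2 ⟨ω₀, t, lt_of_lt_of_le (hRgt ω₀) (le_max_left _ _), rfl⟩
    have h3 := hr _ htO
    rw [norm_smul, hnorm ω₀, mul_one, Real.norm_eq_abs,
      abs_of_pos (lt_of_lt_of_le hRpos (le_max_left _ _))] at h3
    have h4 : r + 1 ≤ r := le_trans (le_max_right (M+1) (r+1)) h3
    linarith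
  -- not preconnected
  refine ⟨hIopen, hOopen, hIconn, hOconn, hdisj, hunion, hIbdd, hOunbdd, ?_⟩
  intro hpc
  have h0c : (0 : EuclideanSpace ℝ (Fin n)) ∈ Cᶜ := by rw [← hunion]; exact Or.inl h0I
  have hbc : ((M+1) • (ω₀ : EuclideanSpace ℝ (Fin n))) ∈ Cᶜ := by
    rw [← hunion]; exact Or.inr hbase
  obtain ⟨z, hz⟩ := hpc Inside Outside hIopen hOopen (hunion ▸ subset_rfl)
    ⟨0, h0c, h0I⟩ ⟨_, hbc, hbase⟩
  exact Set.disjoint_left.1 hdisj hz.2.1 hz.2.2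
end
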